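/- Let N ≥ 2, λ₀ > (N−1)²/4, and for ε ≥ 0 set u_ε(ρ) = (sinh(ρ/2))^{−(N−1+ε)} and f(ρ,ε) = −u_ε''(ρ) − (N−1) coth(ρ) u_ε'(ρ) − λ u_ε(ρ). Then there exist ε₀ > 0 and R > 0 such that f(ρ, ε) < 0 for all λ ≥ λ₀, all ρ ≥ R and all 0 ≤ ε < ε₀. -/

import Mathlib

/-- The `ε`-perturbed radial function `u_ε(ρ) = (sinh(ρ/2))^{-(N-1+ε)}`. -/
noncomputable def uEps (N : ℕ) (ε ρ : ℝ) : ℝ :=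
  Real.sinh (ρ / 2) ^ (-((N : ℝ) - 1 + ε))

/-- `f(ρ,ε) = -u_ε'' - (N-1) coth ρ · u_ε' - λ u_ε`. -/
noncomputable def fEps (N : ℕ) (lam ε ρ : ℝ) : ℝ :=
  -(deriv (deriv (uEps N ε)) ρ)
    - ((N : ℝ) - 1) * (Real.cosh ρ / Real.sinh ρ) * deriv (uEps N ε) ρ
    - lam * uEps N ε ρ

/-!
Write `s = sinh (ρ/2)` and `c = cosh (ρ/2)`. Since `cosh ρ = 2 s² + 1`, `sinh ρ = 2 s c` and
`c² = s² + 1`, the operator `u ↦ -u'' - (N-1) coth ρ · u' - λ u` sends the power `s ^ p` to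
`s ^ (p - 2)` times a polynomial in `s²`. For `p = -(N - 1 + ε)` this gives
`f(ρ, ε) = s ^ (p - 2) * (A s² - B)` with `A = ((N-1)² - ε²)/4 - λ < 0` and
`B = (N - 1 + ε)(1 + ε)/4 ≥ 0`, so `f(ρ, ε) < 0` for every `ρ > 0` and `ε ≥ 0`.
-/

open Real

lemma rpow_sub_one_eq_rpow_sub_two_mul {x : ℝ} (hx : 0 < x) (p : ℝ) :
    x ^ (p - 1) = x ^ (p - 2) * x := by
  rw [show p - 1 = p - 2 + 1 by ring, rpow_add hx, rpow_one]

lemma rpow_eq_rpow_sub_two_mul_sq {x : ℝ} (hx : 0 < x) (p : ℝ) :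
    x ^ p = x ^ (p - 2) * x ^ 2 := by
  rw [← rpow_natCast, ← rpow_add hx]
  norm_num

section SinhHalf

variable (p : ℝ) {ρ : ℝ}

lemma sinh_half_pos (hρ : 0 < ρ) : 0 < sinh (ρ / 2) :=
  sinh_pos_iff.2 (half_pos hρ)

lemma hasDerivAt_sinh_half (ρ : ℝ) :
    HasDerivAt (fun x : ℝ => sinh (x / 2)) (cosh (ρ / 2) / 2) ρ := by
  simpa [Function.comp_def, div_eq_mul_inv] using
    (hasDerivAt_sinh (ρ / 2)).comp ρ ((hasDerivAt_id ρ).div_const 2)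

lemma hasDerivAt_cosh_half (ρ : ℝ) :
    HasDerivAt (fun x : ℝ => cosh (x / 2)) (sinh (ρ / 2) / 2) ρ := by
  simpa [Function.comp_def, div_eq_mul_inv] using
    (hasDerivAt_cosh (ρ / 2)).comp ρ ((hasDerivAt_id ρ).div_const 2)

lemma hasDerivAt_sinh_half_rpow (hρ : 0 < ρ) :
    HasDerivAt (fun x : ℝ => sinh (x / 2) ^ p)
      (p / 2 * sinh (ρ / 2) ^ (p - 1) * cosh (ρ / 2)) ρ :=
  ((hasDerivAt_sinh_half ρ).rpow_const (Or.inl (sinh_half_pos hρ).ne')).congr_deriv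
    (by ring)

lemma deriv_sinh_half_rpow (hρ : 0 < ρ) :
    deriv (fun x : ℝ => sinh (x / 2) ^ p) ρ = p / 2 * sinh (ρ / 2) ^ (p - 1) * cosh (ρ / 2) :=
  (hasDerivAt_sinh_half_rpow p hρ).deriv

lemma deriv_deriv_sinh_half_rpow (hρ : 0 < ρ) :
    deriv (deriv fun x : ℝ => sinh (x / 2) ^ p) ρ
      = p / 4 * sinh (ρ / 2) ^ (p - 2) * (p * sinh (ρ / 2) ^ 2 + (p - 1)) := by
  have hderiv : deriv (fun x : ℝ => sinh (x / 2) ^ p) =ᶠ[nhds ρ]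
      fun x => p / 2 * sinh (x / 2) ^ (p - 1) * cosh (x / 2) := by
    filter_upwards [isOpen_Ioi.mem_nhds hρ] with x hx
    exact deriv_sinh_half_rpow p hx
  have h := ((hasDerivAt_sinh_half_rpow (p - 1) hρ).const_mul (p / 2)).fun_mul
    (hasDerivAt_cosh_half ρ)
  rw [hderiv.deriv_eq, h.deriv, show p - 1 - 1 = p - 2 by ring,
    rpow_sub_one_eq_rpow_sub_two_mul (sinh_half_pos hρ)]
  linear_combination p / 2 * (p - 1) / 2 * sinh (ρ / 2) ^ (p - 2) * cosh_sq (ρ / 2)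

end SinhHalf

lemma fEps_eq (N : ℕ) (lam ε : ℝ) {ρ : ℝ} (hρ : 0 < ρ) :
    fEps N lam ε ρ = sinh (ρ / 2) ^ (-((N : ℝ) - 1 + ε) - 2) *
      (((((N : ℝ) - 1) ^ 2 - ε ^ 2) / 4 - lam) * sinh (ρ / 2) ^ 2
        - ((N : ℝ) - 1 + ε) * (1 + ε) / 4) := by
  set p := -((N : ℝ) - 1 + ε)
  have huEps : uEps N ε = fun x => sinh (x / 2) ^ p := rfl
  have hcosh : cosh ρ = 2 * sinh (ρ / 2) ^ 2 + 1 := by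
    have h := cosh_two_mul (ρ / 2)
    rw [mul_div_cancel₀ ρ two_ne_zero, cosh_sq] at h
    linarith
  have hsinh : sinh ρ = 2 * sinh (ρ / 2) * cosh (ρ / 2) := by
    rw [← sinh_two_mul, mul_div_cancel₀ ρ two_ne_zero]
  have hs := sinh_half_pos hρ
  rw [fEps, huEps]
  beta_reduce
  rw [deriv_deriv_sinh_half_rpow p hρ, deriv_sinh_half_rpow p hρ,
    rpow_sub_one_eq_rpow_sub_two_mul hs, rpow_eq_rpow_sub_two_mul_sq hs p, hcosh, hsinh]
  field_simp
  ring

lemma fEps_neg (N : ℕ) (hN : 1 ≤ N) {lam : ℝ} (hlam : ((N : ℝ) - 1) ^ 2 / 4 < lam)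
    {ε ρ : ℝ} (hε : 0 ≤ ε) (hρ : 0 < ρ) : fEps N lam ε ρ < 0 := by
  have hN' : (1 : ℝ) ≤ N := by exact_mod_cast hN
  rw [fEps_eq N lam ε hρ]
  refine mul_neg_of_pos_of_neg (rpow_pos_of_pos (sinh_half_pos hρ) _) ?_
  have hA : (((N : ℝ) - 1) ^ 2 - ε ^ 2) / 4 - lam < 0 := by nlinarith
  have hB : 0 ≤ ((N : ℝ) - 1 + ε) * (1 + ε) / 4 := by
    have : 0 ≤ (N : ℝ) - 1 := by linarith
    positivity
  nlinarith [pow_pos (sinh_half_pos hρ) 2]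

theorem fEps_neg_of_lam_large (N : ℕ) (hN : 2 ≤ N) (lam₀ : ℝ)
    (hlam₀ : ((N : ℝ) - 1) ^ 2 / 4 < lam₀) :
    ∃ ε₀ > (0:ℝ), ∃ R > (0:ℝ), ∀ lam ≥ lam₀, ∀ ρ ≥ R, ∀ ε : ℝ, 0 ≤ ε → ε < ε₀ →
      fEps N lam ε ρ < 0 :=
  ⟨1, one_pos, 1, one_pos, fun _ hlam _ hρ _ hε _ =>
    fEps_neg N (by omega) (hlam₀.trans_le hlam) hε (one_pos.trans_le hρ)⟩
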